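/- arXiv:0912.0638 — 8 statements merged into one kernel-verified Lean document; each statement's English description precedes it below -/
import Mathlib

section
/- Each of the six polynomials f1 = x, f2 = 2x^3 t − s^2, f3 = 3x^6 u − 3x^3 t s + s^3, f4 = x v − s, f5 = x^2 t s − s^2 v + 2 x^3 t v − 3 x^5 u, and f6 = −18 x^3 t s u + 9 x^6 u^2 + 8 x^3 t^3 + 6 s^3 u − 3 t^2 s^2 lies in the kernel of the derivation D = x^3 ∂/∂s + s ∂/∂t + t ∂/∂u + x^2 ∂/∂v on k[x,s,t,u,v]. -/
open MvPolynomial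

@[simp]
theorem Derivation.map_ofNat {R A M : Type*} [CommSemiring R] [CommSemiring A]
    [AddCommMonoid M] [Algebra R A] [Module A M] [Module R M]
    (D : Derivation R A M) (n : ℕ) [n.AtLeastTwo] : D (ofNat(n) : A) = 0 := by
  rw [← Nat.cast_ofNat]
  exact D.map_natCast n

theorem daigle_freudenburg_invariants_general
    (K : Type*) [Field K]
    (D : Derivation K (MvPolynomial (Fin 5) K) (MvPolynomial (Fin 5) K))
    (hx : D (X 0) = 0) (hs : D (X 1) = X 0 ^ 3) (ht : D (X 2) = X 1)
    (hu : D (X 3) = X 2) (hv : D (X 4) = X 0 ^ 2)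
    (x s t u v : MvPolynomial (Fin 5) K)
    (hxdef : x = X 0) (hsdef : s = X 1) (htdef : t = X 2)
    (hudef : u = X 3) (hvdef : v = X 4) :
    D (x) = 0 ∧
    D (2 * x ^ 3 * t - s ^ 2) = 0 ∧
    D (3 * x ^ 6 * u - 3 * x ^ 3 * t * s + s ^ 3) = 0 ∧
    D (x * v - s) = 0 ∧
    D (x ^ 2 * t * s - s ^ 2 * v + 2 * x ^ 3 * t * v - 3 * x ^ 5 * u) = 0 ∧
    D (-18 * x ^ 3 * t * s * u + 9 * x ^ 6 * u ^ 2 + 8 * x ^ 3 * t ^ 3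
        + 6 * s ^ 3 * u - 3 * t ^ 2 * s ^ 2) = 0 := by
  subst hxdef hsdef htdef hudef hvdef
  refine ⟨hx, ?_, ?_, ?_, ?_, ?_⟩ <;>
  · simp only [Derivation.leibniz, Derivation.leibniz_pow, Derivation.map_ofNat, map_sub,
      map_add, map_neg, smul_eq_mul, hx, hs, ht, hu, hv]
    ring

theorem daigle_freudenburg_invariants
    (K : Type*) [Field K] [CharZero K]
    (D : Derivation K (MvPolynomial (Fin 5) K) (MvPolynomial (Fin 5) K))
    (hx : D (X 0) = 0) (hs : D (X 1) = X 0 ^ 3) (ht : D (X 2) = X 1)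
    (hu : D (X 3) = X 2) (hv : D (X 4) = X 0 ^ 2)
    (x s t u v : MvPolynomial (Fin 5) K)
    (hxdef : x = X 0) (hsdef : s = X 1) (htdef : t = X 2)
    (hudef : u = X 3) (hvdef : v = X 4) :
    D (x) = 0 ∧
    D (2 * x ^ 3 * t - s ^ 2) = 0 ∧
    D (3 * x ^ 6 * u - 3 * x ^ 3 * t * s + s ^ 3) = 0 ∧
    D (x * v - s) = 0 ∧
    D (x ^ 2 * t * s - s ^ 2 * v + 2 * x ^ 3 * t * v - 3 * x ^ 5 * u) = 0 ∧
    D (-18 * x ^ 3 * t * s * u + 9 * x ^ 6 * u ^ 2 + 8 * x ^ 3 * t ^ 3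
        + 6 * s ^ 3 * u - 3 * t ^ 2 * s ^ 2) = 0 :=
  daigle_freudenburg_invariants_general K D hx hs ht hu hv x s t u v hxdef hsdef htdef hudef hvdef
end

section
/- The kernel of the derivation Δ = s ∂/∂t + t ∂/∂u on k[s,t,u,v] equals the k-subalgebra k[s, 2us − t^2, v]. -/
/-!
Write `w = 2us - t²`. Since `Δ t = s` and `Δ s = 0`, the variable `t` is a local slice: the
substitution `Θ = coordChange : u ↦ w` becomes invertible once `s` is inverted, and it
intertwines `s ∂/∂t` with `Δ`. So for `f ∈ ker Δ` write `sⁿ f = Θ g`; then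
`s Θ(∂g/∂t) = Δ(sⁿ f) = 0`, hence `g` does not involve `t` and `sⁿ f ∈ k[s, w, v]`. Finally
`k[s, w, v]` is saturated with respect to `s`: modulo `s` its generators become `0, -t², v`,
and `-t², v` are algebraically independent.
-/

open MvPolynomial

namespace MvPolynomial

variable {σ R : Type*}

theorem X_dvd_sub_aeval_update [CommRing R] [DecidableEq σ] (i : σ) (p : MvPolynomial σ R) :
    X i ∣ p - aeval (Function.update X i 0) p := by
  induction p using MvPolynomial.induction_on with
  | C a => simp
  | add p q hp hq => simpa [add_sub_add_comm] using dvd_add hp hq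
  | mul_X p j hp =>
    rw [map_mul, aeval_X]
    by_cases hj : j = i
    · subst hj
      simp
    · rw [Function.update_of_ne hj, ← sub_mul]
      exact hp.mul_right _

theorem notMem_vars_of_pderiv_eq_zero [CommSemiring R] [NoZeroDivisors R] [CharZero R] {i : σ}
    {p : MvPolynomial σ R} (h : pderiv i p = 0) : i ∉ p.vars := by
  classical
  intro hi
  obtain ⟨m, hm, hmi⟩ := (mem_vars_iff_mem_support i).1 hi
  have hm' : m - Finsupp.single i 1 + Finsupp.single i 1 = m :=
    tsub_add_cancel_of_le (Finsupp.single_le_iff.2 (Nat.one_le_iff_ne_zero.2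
      (Finsupp.mem_support_iff.1 hmi)))
  have := coeff_pderiv (i := i) p (m - Finsupp.single i 1)
  rw [h, hm', coeff_zero, eq_comm, mul_eq_zero] at this
  exact this.elim (mem_support_iff.1 hm) (Nat.cast_add_one_ne_zero _)

end MvPolynomial

theorem Subalgebra.exists_pow_mul_mem_of_mem_adjoin {R A : Type*} [CommSemiring R]
    [CommSemiring A] [Algebra R A] {S : Subalgebra R A} {a : A} (ha : a ∈ S) {s : Set A}
    (hs : ∀ x ∈ s, ∃ n : ℕ, a ^ n * x ∈ S) {x : A} (hx : x ∈ Algebra.adjoin R s) :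
    ∃ n : ℕ, a ^ n * x ∈ S := by
  induction hx using Algebra.adjoin_induction with
  | mem x hx => exact hs x hx
  | algebraMap r => exact ⟨0, by simp⟩
  | add x y _ _ hx hy =>
    obtain ⟨m, hm⟩ := hx
    obtain ⟨n, hn⟩ := hy
    refine ⟨m + n, ?_⟩
    convert S.add_mem (S.mul_mem (S.pow_mem ha n) hm) (S.mul_mem (S.pow_mem ha m) hn) using 1
    ring
  | mul x y _ _ hx hy =>
    obtain ⟨m, hm⟩ := hx
    obtain ⟨n, hn⟩ := hy
    exact ⟨m + n, by convert S.mul_mem hm hn using 1; ring⟩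

namespace BinaryForms

variable {K : Type*} [Field K]

variable (K) in
noncomputable def coordChange : MvPolynomial (Fin 4) K →ₐ[K] MvPolynomial (Fin 4) K :=
  aeval ![X 0, X 1, 2 * X 2 * X 0 - X 1 ^ 2, X 3]

variable (K) in
noncomputable def invariants : Subalgebra K (MvPolynomial (Fin 4) K) :=
  Algebra.adjoin K {X 0, 2 * X 2 * X 0 - X 1 ^ 2, X 3}

theorem coordChange_injective [CharZero K] : Function.Injective (coordChange K) := by
  let F := FractionRing (MvPolynomial (Fin 4) K)
  have hF := IsFractionRing.injective (MvPolynomial (Fin 4) K) F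
  let x : Fin 4 → F := fun i => algebraMap (MvPolynomial (Fin 4) K) F (X i)
  have hx0 : x 0 ≠ 0 := (map_ne_zero_iff _ hF).2 (X_ne_zero 0)
  have h2 : (2 : F) ≠ 0 := two_ne_zero
  let inv : MvPolynomial (Fin 4) K →ₐ[K] F :=
    aeval ![x 0, x 1, (x 2 + x 1 ^ 2) / (2 * x 0), x 3]
  have hinv : inv.comp (coordChange K) = IsScalarTower.toAlgHom K _ F := by
    ext i
    change inv (coordChange K (X i)) = x i
    fin_cases i <;> simp [coordChange, inv]
    rw [mul_right_comm, mul_div_cancel₀ _ (mul_ne_zero h2 hx0), add_sub_cancel_right]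
  refine Function.Injective.of_comp (f := inv) ?_
  rw [← AlgHom.coe_comp, hinv]
  exact hF

theorem exists_X_zero_pow_mul_mem_range_coordChange [CharZero K] (f : MvPolynomial (Fin 4) K) :
    ∃ n : ℕ, X 0 ^ n * f ∈ (coordChange K).range := by
  have hf : f ∈ Algebra.adjoin K (Set.range X) := by simp [adjoin_range_X]
  refine Subalgebra.exists_pow_mul_mem_of_mem_adjoin (S := (coordChange K).range) (a := X 0)
    ⟨X 0, by simp [coordChange]⟩ ?_ hf
  rintro _ ⟨i, rfl⟩
  fin_cases i
  · exact ⟨0, X 0, by simp [coordChange]⟩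
  · exact ⟨0, X 1, by simp [coordChange]⟩
  · refine ⟨1, C 2⁻¹ * (X 2 + X 1 ^ 2), ?_⟩
    have h2 : (C 2⁻¹ * 2 : MvPolynomial (Fin 4) K) = 1 := by
      rw [← map_ofNat C 2, ← C_mul, inv_mul_cancel₀ two_ne_zero, C_1]
    calc coordChange K (C 2⁻¹ * (X 2 + X 1 ^ 2)) = C 2⁻¹ * 2 * (X 2 * X 0) := by
          simp [coordChange, mul_assoc]
      _ = X 0 ^ 1 * X 2 := by rw [h2]; ring
  · exact ⟨0, X 3, by simp [coordChange]⟩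

section Derivation

variable (Δ : Derivation K (MvPolynomial (Fin 4) K) (MvPolynomial (Fin 4) K))

theorem derivation_two_mul_mul_sub_sq (hΔs : Δ (X 0) = 0) (hΔt : Δ (X 1) = X 0)
    (hΔu : Δ (X 2) = X 1) : Δ (2 * X 2 * X 0 - X 1 ^ 2) = 0 := by
  have h2 : Δ 2 = 0 := by simpa using Δ.map_natCast 2
  simp only [map_sub, Δ.leibniz, Δ.leibniz_pow, hΔs, hΔt, hΔu, h2, smul_eq_mul]
  ring

theorem derivation_coordChange (hΔs : Δ (X 0) = 0) (hΔt : Δ (X 1) = X 0)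
    (hΔu : Δ (X 2) = X 1) (hΔv : Δ (X 3) = 0) (g : MvPolynomial (Fin 4) K) :
    Δ (coordChange K g) = X 0 * coordChange K (pderiv 1 g) := by
  have hX : ∀ i, Δ (coordChange K (X i)) = X 0 * coordChange K (pderiv 1 (X i)) := by
    intro i
    fin_cases i <;> simp [coordChange, pderiv_X, hΔs, hΔt, hΔv,
      derivation_two_mul_mul_sub_sq Δ hΔs hΔt hΔu]
  induction g using MvPolynomial.induction_on with
  | C a => simp [coordChange]
  | add p q hp hq => simp [hp, hq, mul_add]
  | mul_X p i hp =>
    rw [map_mul, Δ.leibniz, hp, hX, pderiv_mul, map_add, map_mul, map_mul, smul_eq_mul,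
      smul_eq_mul]
    ring

end Derivation

theorem invariants_eq_range_aeval :
    invariants K = (aeval ![X 0, 2 * X 2 * X 0 - X 1 ^ 2, X 3] :
      MvPolynomial (Fin 3) K →ₐ[K] MvPolynomial (Fin 4) K).range := by
  rw [invariants, ← Algebra.adjoin_range_eq_range_aeval, Matrix.range_cons,
    Matrix.range_cons_cons_empty, Set.singleton_union]

theorem mem_invariants_of_X_zero_mul_mem {h : MvPolynomial (Fin 4) K}
    (hh : X 0 * h ∈ invariants K) : h ∈ invariants K := by
  rw [invariants_eq_range_aeval] at hh ⊢
  obtain ⟨P, hP⟩ := (AlgHom.mem_range _).1 hh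
  let ν : MvPolynomial (Fin 3) K →ₐ[K] MvPolynomial (Fin 3) K := aeval ![0, -X 1, X 2]
  -- `P(s, w, v) ↦ P(0, -t², v²)` is `expand 2` of `P(0, -t, v)`, and `expand 2` is injective.
  have hred : (aeval ![0, X 1, 0, X 2 ^ 2]).comp
      (aeval ![X 0, 2 * X 2 * X 0 - X 1 ^ 2, X 3]) = (expand 2).comp ν := by
    ext i
    fin_cases i <;> simp [ν]
  have hνP : ν P = 0 := by
    apply expand_injective two_pos
    have := AlgHom.congr_fun hred P
    rw [AlgHom.comp_apply, AlgHom.comp_apply, hP, map_mul] at this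
    simpa using this.symm
  have hνν : ν.comp ν = aeval (Function.update X 0 0) := by
    ext i
    fin_cases i <;> simp [ν]
  obtain ⟨Q, rfl⟩ : X 0 ∣ P := by
    simpa [← hνν, hνP] using X_dvd_sub_aeval_update 0 P
  exact (AlgHom.mem_range _).2
    ⟨Q, mul_left_cancel₀ (X_ne_zero 0) (by rw [← hP, map_mul]; simp)⟩

theorem mem_invariants_of_X_zero_pow_mul_mem {h : MvPolynomial (Fin 4) K} (n : ℕ)
    (hh : X 0 ^ n * h ∈ invariants K) : h ∈ invariants K := by
  induction n with
  | zero => simpa using hh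
  | succ n ih => exact ih (mem_invariants_of_X_zero_mul_mem (by rwa [pow_succ', mul_assoc] at hh))

theorem coordChange_mem_invariants {g : MvPolynomial (Fin 4) K} (hg : 1 ∉ g.vars) :
    coordChange K g ∈ invariants K := by
  have hsupp : g ∈ supported K ({0, 2, 3} : Set (Fin 4)) :=
    mem_supported.2 fun i hi => by fin_cases i <;> simp_all
  have : coordChange K g ∈ (supported K ({0, 2, 3} : Set (Fin 4))).map (coordChange K) :=
    Subalgebra.mem_map.2 ⟨g, hsupp, rfl⟩
  rw [supported_eq_adjoin_X, AlgHom.map_adjoin] at this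
  simpa [Set.image_insert_eq, coordChange, invariants] using this

end BinaryForms

open BinaryForms in
theorem kernel_of_Delta_binary_forms
    (K : Type*) [Field K] [CharZero K]
    (Δ : Derivation K (MvPolynomial (Fin 4) K) (MvPolynomial (Fin 4) K))
    (hΔs : Δ (X 0) = 0) (hΔt : Δ (X 1) = X 0) (hΔu : Δ (X 2) = X 1)
    (hΔv : Δ (X 3) = 0) :
    ∀ f : MvPolynomial (Fin 4) K,
      Δ f = 0 ↔
        f ∈ Algebra.adjoin K
          ({X 0, 2 * X 2 * X 0 - X 1 ^ 2, X 3} :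
            Set (MvPolynomial (Fin 4) K)) := by
  intro f
  change _ ↔ f ∈ invariants K
  constructor
  · intro hf
    obtain ⟨n, hn⟩ := exists_X_zero_pow_mul_mem_range_coordChange f
    obtain ⟨g, hg⟩ := (AlgHom.mem_range _).1 hn
    have hΔg : X 0 * coordChange K (pderiv 1 g) = 0 := by
      rw [← derivation_coordChange Δ hΔs hΔt hΔu hΔv, hg, Δ.leibniz, hf, Δ.leibniz_pow, hΔs]
      simp
    have hg' : pderiv 1 g = 0 :=
      coordChange_injective (by rw [(mul_eq_zero.1 hΔg).resolve_left (X_ne_zero 0), map_zero])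
    exact mem_invariants_of_X_zero_pow_mul_mem n
      (hg ▸ coordChange_mem_invariants (notMem_vars_of_pderiv_eq_zero hg'))
  · refine fun hf => Derivation.eqOn_adjoin (D2 := 0) ?_ hf
    rintro _ (rfl | rfl | rfl)
    exacts [hΔs, derivation_two_mul_mul_sub_sq Δ hΔs hΔt hΔu, hΔv]
end

section
/- Let φ : k[x,s,t,u,v] → k[x,v,t,u] be the k-algebra map substituting s ↦ xv (i.e., φ(f)(x,v,t,u) = f(x,xv,t,u,v)), and let Δ' = x^2 ∂/∂v + xv ∂/∂t + t ∂/∂u on k[x,v,t,u]. Then Δ' ∘ φ = φ ∘ D, where D = x^3 ∂/∂s + s ∂/∂t + t ∂/∂u + x^2 ∂/∂v. In particular φ maps ker D into ker Δ'. -/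
open MvPolynomial

/-- Both sides are `φ`-twisted derivations, so they agree once they agree on the variables. -/
theorem MvPolynomial.derivation_comp_algHom_eq_of_forall_X
    {R σ B : Type*} [CommRing R] [CommRing B] [Algebra R B]
    (D : Derivation R (MvPolynomial σ R) (MvPolynomial σ R)) (Δ : Derivation R B B)
    (φ : MvPolynomial σ R →ₐ[R] B) (h : ∀ i, Δ (φ (X i)) = φ (D (X i)))
    (f : MvPolynomial σ R) : Δ (φ f) = φ (D f) := by
  induction f using MvPolynomial.induction_on with
  | C a => simp
  | add p q hp hq => simp only [map_add, hp, hq]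
  | mul_X p i hp => simp only [map_mul, Derivation.leibniz, smul_eq_mul, map_add, hp, h]

theorem daigle_freudenburg_phi_equivariant_general
    (K : Type*) [Field K]
    (D : Derivation K (MvPolynomial (Fin 5) K) (MvPolynomial (Fin 5) K))
    (hx : D (X 0) = 0) (hs : D (X 1) = X 0 ^ 3) (ht : D (X 2) = X 1)
    (hu : D (X 3) = X 2) (hv : D (X 4) = X 0 ^ 2)
    (Δ' : Derivation K (MvPolynomial (Fin 4) K) (MvPolynomial (Fin 4) K))
    (hΔx : Δ' (X 0) = 0) (hΔv : Δ' (X 1) = X 0 ^ 2)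
    (hΔt : Δ' (X 2) = X 0 * X 1) (hΔu : Δ' (X 3) = X 2)
    (φ : MvPolynomial (Fin 5) K →ₐ[K] MvPolynomial (Fin 4) K)
    (hφ : φ = aeval ![X 0, X 0 * X 1, X 2, X 3, X 1]) :
    (∀ f : MvPolynomial (Fin 5) K, Δ' (φ f) = φ (D f)) ∧
    (∀ f : MvPolynomial (Fin 5) K, D f = 0 → Δ' (φ f) = 0) := by
  have on_X : ∀ i : Fin 5, Δ' (φ (X i)) = φ (D (X i)) := by
    subst hφ
    intro i
    fin_cases i <;> simp [hx, hs, ht, hu, hv, hΔx, hΔv, hΔt, hΔu]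
    -- only `s ↦ x v` is left: `Δ' (x v) = x · x ^ 2 = x ^ 3`
    ring
  have intertwines := derivation_comp_algHom_eq_of_forall_X D Δ' φ on_X
  exact ⟨intertwines, fun f hf => by rw [intertwines, hf, map_zero]⟩

theorem daigle_freudenburg_phi_equivariant
    (K : Type*) [Field K] [CharZero K]
    (D : Derivation K (MvPolynomial (Fin 5) K) (MvPolynomial (Fin 5) K))
    (hx : D (X 0) = 0) (hs : D (X 1) = X 0 ^ 3) (ht : D (X 2) = X 1)
    (hu : D (X 3) = X 2) (hv : D (X 4) = X 0 ^ 2)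
    (Δ' : Derivation K (MvPolynomial (Fin 4) K) (MvPolynomial (Fin 4) K))
    (hΔx : Δ' (X 0) = 0) (hΔv : Δ' (X 1) = X 0 ^ 2)
    (hΔt : Δ' (X 2) = X 0 * X 1) (hΔu : Δ' (X 3) = X 2)
    (φ : MvPolynomial (Fin 5) K →ₐ[K] MvPolynomial (Fin 4) K)
    (hφ : φ = aeval ![X 0, X 0 * X 1, X 2, X 3, X 1]) :
    (∀ f : MvPolynomial (Fin 5) K, Δ' (φ f) = φ (D f)) ∧
    (∀ f : MvPolynomial (Fin 5) K, D f = 0 → Δ' (φ f) = 0) :=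
  daigle_freudenburg_phi_equivariant_general K D hx hs ht hu hv Δ' hΔx hΔv hΔt hΔu φ hφ
end

section
/- Each of h1 = x, h2 = 2xt − v^2, h3 = 3x^3 u − 3xvt + v^3, and h4 = 8xt^3 + 9x^4 u^2 − 18x^2 t u v − 3t^2 v^2 + 6 x u v^3 lies in the kernel of the derivation Δ' = x^2 ∂/∂v + xv ∂/∂t + t ∂/∂u on k[x,v,t,u]. -/
open MvPolynomial

namespace Derivation

variable {R A : Type*} [CommRing R] [CommRing A] [Algebra R A] (D : Derivation R A A)
  {x v t u : A}

theorem map_ofNat_s13 (n : ℕ) [n.AtLeastTwo] : D (no_index (OfNat.ofNat n : A)) = 0 :=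
  D.map_natCast n

theorem map_two_mul_sub_sq_eq_zero (hx : D x = 0) (hv : D v = x ^ 2) (ht : D t = x * v) :
    D (2 * x * t - v ^ 2) = 0 := by
  simp only [leibniz, leibniz_pow, map_sub, map_ofNat_s13, hx, hv, ht, smul_eq_mul, nsmul_eq_mul]
  ring

theorem map_cubic_invariant_eq_zero (hx : D x = 0) (hv : D v = x ^ 2) (ht : D t = x * v)
    (hu : D u = t) : D (3 * x ^ 3 * u - 3 * x * v * t + v ^ 3) = 0 := by
  simp only [leibniz, leibniz_pow, map_sub, map_add, map_ofNat_s13, hx, hv, ht, hu, smul_eq_mul,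
    nsmul_eq_mul]
  ring

theorem map_quartic_invariant_eq_zero (hx : D x = 0) (hv : D v = x ^ 2) (ht : D t = x * v)
    (hu : D u = t) :
    D (8 * x * t ^ 3 + 9 * x ^ 4 * u ^ 2 - 18 * x ^ 2 * t * u * v
        - 3 * t ^ 2 * v ^ 2 + 6 * x * u * v ^ 3) = 0 := by
  simp only [leibniz, leibniz_pow, map_sub, map_add, map_ofNat_s13, hx, hv, ht, hu, smul_eq_mul,
    nsmul_eq_mul]
  ring

end Derivation

theorem h_invariants_general
    (K : Type*) [Field K]
    (Δ' : Derivation K (MvPolynomial (Fin 4) K) (MvPolynomial (Fin 4) K))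
    (hΔx : Δ' (X 0) = 0) (hΔv : Δ' (X 1) = X 0 ^ 2)
    (hΔt : Δ' (X 2) = X 0 * X 1) (hΔu : Δ' (X 3) = X 2)
    (x v t u : MvPolynomial (Fin 4) K)
    (hxdef : x = X 0) (hvdef : v = X 1) (htdef : t = X 2) (hudef : u = X 3) :
    Δ' x = 0 ∧
    Δ' (2 * x * t - v ^ 2) = 0 ∧
    Δ' (3 * x ^ 3 * u - 3 * x * v * t + v ^ 3) = 0 ∧
    Δ' (8 * x * t ^ 3 + 9 * x ^ 4 * u ^ 2 - 18 * x ^ 2 * t * u * v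
        - 3 * t ^ 2 * v ^ 2 + 6 * x * u * v ^ 3) = 0 := by
  subst hxdef hvdef htdef hudef
  exact ⟨hΔx, Δ'.map_two_mul_sub_sq_eq_zero hΔx hΔv hΔt,
    Δ'.map_cubic_invariant_eq_zero hΔx hΔv hΔt hΔu,
    Δ'.map_quartic_invariant_eq_zero hΔx hΔv hΔt hΔu⟩

theorem h_invariants
    (K : Type*) [Field K] [CharZero K]
    (Δ' : Derivation K (MvPolynomial (Fin 4) K) (MvPolynomial (Fin 4) K))
    (hΔx : Δ' (X 0) = 0) (hΔv : Δ' (X 1) = X 0 ^ 2)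
    (hΔt : Δ' (X 2) = X 0 * X 1) (hΔu : Δ' (X 3) = X 2)
    (x v t u : MvPolynomial (Fin 4) K)
    (hxdef : x = X 0) (hvdef : v = X 1) (htdef : t = X 2) (hudef : u = X 3) :
    Δ' x = 0 ∧
    Δ' (2 * x * t - v ^ 2) = 0 ∧
    Δ' (3 * x ^ 3 * u - 3 * x * v * t + v ^ 3) = 0 ∧
    Δ' (8 * x * t ^ 3 + 9 * x ^ 4 * u ^ 2 - 18 * x ^ 2 * t * u * v
        - 3 * t ^ 2 * v ^ 2 + 6 * x * u * v ^ 3) = 0 :=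
  h_invariants_general K Δ' hΔx hΔv hΔt hΔu x v t u hxdef hvdef htdef hudef
end

section
/- The ideal of polynomials P ∈ k[X1,X2,X3,X4] such that P(x, 2xt−v^2, 3x^3u−3xvt+v^3, 8xt^3+9x^4u^2−18x^2tuv−3t^2v^2+6xuv^3) lies in the ideal (x) of k[x,v,t,u] equals the ideal (X1, X2^3 + X3^2) of k[X1,X2,X3,X4]. Equivalently, {P : P(0, −v^2, v^3, −3t^2 v^2) = 0 in k[v,t]} = (X1, X2^3 + X3^2). -/
/-!
Setting `x = 0` sends the generators to `(0, -v², v³, -3t²v²)`, and a polynomial lies in `(x)`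
exactly when it vanishes at `x = 0`, so the first claim reduces to the second. Modulo
`(X₀, X₁³ + X₂²)` every `P` is `A(X₁, X₃) + X₂ B(X₁, X₃)`, which is sent to
`A(-v², -3t²v²) + v³ B(-v², -3t²v²)`. The substitution `v ↦ -v` separates the two summands, and
each vanishes only for `A = B = 0`, because `-v²` and `-3t²v²` are algebraically independent:
`k[v, t]` is algebraic over the algebra they generate and has transcendence degree 2.
-/

open MvPolynomial

theorem MvPolynomial.aeval_sub_aeval_mem {R S σ : Type*} [CommRing R] [CommRing S] [Algebra R S]
    {I : Ideal S} {f g : σ → S} (hfg : ∀ i, f i - g i ∈ I) (p : MvPolynomial σ R) :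
    aeval f p - aeval g p ∈ I := by
  rw [← Ideal.Quotient.eq, ← Ideal.Quotient.mkₐ_eq_mk R, ← AlgHom.comp_apply,
    ← AlgHom.comp_apply]
  congr 1
  refine algHom_ext fun i => ?_
  simpa [Ideal.Quotient.eq] using hfg i

theorem MvPolynomial.mem_span_X_iff_aeval_update_zero {R σ : Type*} [CommRing R] [DecidableEq σ]
    (i : σ) (p : MvPolynomial σ R) :
    p ∈ Ideal.span {X i} ↔ aeval (Function.update (X : σ → MvPolynomial σ R) i 0) p = 0 := by
  refine ⟨fun hp => ?_, fun hp => ?_⟩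
  · obtain ⟨q, rfl⟩ := Ideal.mem_span_singleton'.mp hp
    simp
  · have hX (j : σ) : X j - Function.update X i 0 j ∈ Ideal.span {(X i : MvPolynomial σ R)} := by
      rcases eq_or_ne j i with rfl | hj <;> simp [*]
    have := aeval_sub_aeval_mem (R := R) hX p
    rwa [hp, sub_zero, aeval_X_left_apply] at this

theorem algebraicIndependent_neg_sq_neg_three_mul (K : Type*) [Field K] (h3 : (3 : K) ≠ 0) :
    AlgebraicIndependent K
      (![-X 0 ^ 2, -3 * X 1 ^ 2 * X 0 ^ 2] : Fin 2 → MvPolynomial (Fin 2) K) := by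
  set y : Fin 2 → MvPolynomial (Fin 2) K := ![-X 0 ^ 2, -3 * X 1 ^ 2 * X 0 ^ 2]
  set B := Algebra.adjoin K (Set.range y)
  have alg_of_mem (p) (hp : p ∈ B) : IsAlgebraic B p := isAlgebraic_algebraMap (⟨p, hp⟩ : B)
  have mem (i) : y i ∈ B := Algebra.subset_adjoin ⟨i, rfl⟩
  have alg_sq : IsAlgebraic B (X 0 ^ 2 : MvPolynomial (Fin 2) K) :=
    alg_of_mem _ (by simpa [y] using B.neg_mem (mem 0))
  have alg_X (i) : IsAlgebraic B (X i : MvPolynomial (Fin 2) K) := by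
    refine IsAlgebraic.of_pow two_pos ?_
    fin_cases i
    · exact alg_sq
    · refine alg_sq.of_mul (mem_nonZeroDivisors_of_ne_zero (pow_ne_zero _ (X_ne_zero _)))
        (alg_of_mem _ ?_)
      convert B.smul_mem (mem 1) (-(3 : K)⁻¹) using 1
      simp [y, smul_eq_C_mul, ← mul_assoc, ← map_ofNat C 3, ← C_mul, h3]
      ring
  have : Algebra.IsAlgebraic B (MvPolynomial (Fin 2) K) := by
    refine ⟨fun p => (Algebra.isAlgebraic_adjoin_iff (s := Set.range X).mpr ?_) p ?_⟩
    · rintro _ ⟨i, rfl⟩; exact alg_X i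
    · rw [← Subalgebra.mem_restrictScalars K, Algebra.Subalgebra.restrictScalars_adjoin,
        adjoin_range_X, sup_top_eq]
      trivial
  exact (Algebra.IsAlgebraic.isTranscendenceBasis_of_lift_le_trdeg_of_finite K y
    (by simp [MvPolynomial.trdeg_of_isDomain])).1

theorem aeval_neg_sq_neg_three_mul_injective (K : Type*) [Field K] (h3 : (3 : K) ≠ 0) :
    Function.Injective
      (aeval ![-X 1 ^ 2, -3 * X 2 ^ 2 * X 1 ^ 2] :
        MvPolynomial (Fin 2) K → MvPolynomial (Fin 4) K) := by
  have := (algebraicIndependent_neg_sq_neg_three_mul K h3).map'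
    (rename_injective (R := K) ![(1 : Fin 4), 2] (by decide))
  have hy : (rename ![(1 : Fin 4), 2] ∘ ![-X 0 ^ 2, -3 * X 1 ^ 2 * X 0 ^ 2] :
      Fin 2 → MvPolynomial (Fin 4) K) = ![-X 1 ^ 2, -3 * X 2 ^ 2 * X 1 ^ 2] := by
    funext i; fin_cases i <;> simp [map_ofNat]
  rwa [hy, algebraicIndependent_iff_injective_aeval] at this

theorem eq_zero_of_aeval_add_X_pow_three_mul_aeval_eq_zero (K : Type*) [Field K]
    (h2 : (2 : K) ≠ 0) (h3 : (3 : K) ≠ 0) {A B : MvPolynomial (Fin 2) K}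
    (h : aeval ![-X 1 ^ 2, -3 * X 2 ^ 2 * X 1 ^ 2] A
        + X 1 ^ 3 * aeval ![-X 1 ^ 2, -3 * X 2 ^ 2 * X 1 ^ 2] B
        = (0 : MvPolynomial (Fin 4) K)) :
    A = 0 ∧ B = 0 := by
  set y : Fin 2 → MvPolynomial (Fin 4) K := ![-X 1 ^ 2, -3 * X 2 ^ 2 * X 1 ^ 2]
  set σ : MvPolynomial (Fin 4) K →ₐ[K] MvPolynomial (Fin 4) K := aeval ![X 0, -X 1, X 2, X 3]
  have hy : (fun i => σ (y i)) = y := by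
    funext i; fin_cases i <;> simp [σ, y, map_ofNat]
  have h' := congrArg σ h
  rw [map_add, map_mul, map_pow, map_zero, comp_aeval_apply, comp_aeval_apply, hy,
    aeval_X] at h'
  simp only [Matrix.cons_val_one, Matrix.cons_val_zero] at h'
  have hinj := aeval_neg_sq_neg_three_mul_injective K h3
  have h2' : (2 : MvPolynomial (Fin 4) K) ≠ 0 := by
    rw [← map_ofNat C 2]; exact C_ne_zero.mpr h2
  refine ⟨hinj ?_, hinj ?_⟩
  · have : 2 * aeval y A = 0 := by linear_combination h + h'
    exact (mul_eq_zero.mp this).resolve_left h2'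
  · have : 2 * X 1 ^ 3 * aeval y B = 0 := by linear_combination h - h'
    exact (mul_eq_zero.mp this).resolve_left (mul_ne_zero h2' (pow_ne_zero _ (X_ne_zero _)))

theorem exists_sub_aeval_add_X_mul_aeval_mem_span (R : Type*) [CommRing R]
    (P : MvPolynomial (Fin 4) R) :
    ∃ A B : MvPolynomial (Fin 2) R,
      P - (aeval ![X 1, X 3] A + X 2 * aeval ![X 1, X 3] B) ∈
        Ideal.span {X 0, X 1 ^ 3 + X 2 ^ 2} := by
  set I : Ideal (MvPolynomial (Fin 4) R) := Ideal.span {X 0, X 1 ^ 3 + X 2 ^ 2}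
  have hX0 : X 0 ∈ I := Ideal.subset_span (Set.mem_insert _ _)
  have hcusp : X 1 ^ 3 + X 2 ^ 2 ∈ I := Ideal.subset_span (Set.mem_insert_of_mem _ rfl)
  set ι : MvPolynomial (Fin 2) R →ₐ[R] MvPolynomial (Fin 4) R := aeval ![X 1, X 3]
  induction P using MvPolynomial.induction_on with
  | C a => exact ⟨C a, 0, by simp [ι]⟩
  | add p q hp hq =>
    obtain ⟨A₁, B₁, h₁⟩ := hp
    obtain ⟨A₂, B₂, h₂⟩ := hq
    refine ⟨A₁ + A₂, B₁ + B₂, ?_⟩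
    convert I.add_mem h₁ h₂ using 1
    simp only [map_add]
    ring
  | mul_X p i hp =>
    obtain ⟨A, B, hAB⟩ := hp
    fin_cases i
    · exact ⟨0, 0, by simpa using I.mul_mem_left p hX0⟩
    · refine ⟨A * X 0, B * X 0, ?_⟩
      convert I.mul_mem_right (X 1) hAB using 1
      simp [ι]
      ring
    · -- `X 2 ^ 2 ≡ -X 1 ^ 3`
      refine ⟨-X 0 ^ 3 * B, A, ?_⟩
      convert I.add_mem (I.mul_mem_right (X 2) hAB) (I.mul_mem_left (ι B) hcusp) using 1
      simp [ι]
      ring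
    · refine ⟨A * X 1, B * X 1, ?_⟩
      convert I.mul_mem_right (X 3) hAB using 1
      simp [ι]
      ring

theorem aeval_eq_zero_iff_mem_span_cusp (K : Type*) [Field K] (h2 : (2 : K) ≠ 0) (h3 : (3 : K) ≠ 0)
    (P : MvPolynomial (Fin 4) K) :
    aeval ![(0 : MvPolynomial (Fin 4) K), -X 1 ^ 2, X 1 ^ 3, -3 * X 2 ^ 2 * X 1 ^ 2] P = 0 ↔
      P ∈ Ideal.span {X 0, X 1 ^ 3 + X 2 ^ 2} := by
  set φ : MvPolynomial (Fin 4) K →ₐ[K] MvPolynomial (Fin 4) K :=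
    aeval ![0, -X 1 ^ 2, X 1 ^ 3, -3 * X 2 ^ 2 * X 1 ^ 2]
  have span_le_ker : Ideal.span {X 0, X 1 ^ 3 + X 2 ^ 2} ≤ RingHom.ker φ := by
    rw [Ideal.span_le]
    rintro q (rfl | rfl) <;> simp [φ]
    ring
  refine ⟨fun hP => ?_, fun hP => span_le_ker hP⟩
  obtain ⟨A, B, hAB⟩ := exists_sub_aeval_add_X_mul_aeval_mem_span K P
  have hφ := span_le_ker hAB
  rw [RingHom.mem_ker, map_sub, hP, zero_sub, neg_eq_zero] at hφ
  have hφι : (fun i => φ (![X 1, X 3] i)) = ![-X 1 ^ 2, -3 * X 2 ^ 2 * X 1 ^ 2] := by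
    funext i; fin_cases i <;> simp [φ]
  rw [map_add, map_mul, comp_aeval_apply, comp_aeval_apply, hφι] at hφ
  obtain ⟨rfl, rfl⟩ :=
    eq_zero_of_aeval_add_X_pow_three_mul_aeval_eq_zero K h2 h3 (by simpa [φ] using hφ)
  simpa using hAB

theorem relations_ideal_mod_x
    (K : Type*) [Field K] [CharZero K]
    (h₁ h₂ h₃ h₄ : MvPolynomial (Fin 4) K)
    (hh₁ : h₁ = X 0)
    (hh₂ : h₂ = 2 * X 0 * X 2 - X 1 ^ 2)
    (hh₃ : h₃ = 3 * X 0 ^ 3 * X 3 - 3 * X 0 * X 1 * X 2 + X 1 ^ 3)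
    (hh₄ : h₄ = 8 * X 0 * X 2 ^ 3 + 9 * X 0 ^ 4 * X 3 ^ 2
        - 18 * X 0 ^ 2 * X 2 * X 3 * X 1 - 3 * X 2 ^ 2 * X 1 ^ 2
        + 6 * X 0 * X 3 * X 1 ^ 3) :
    ∀ P : MvPolynomial (Fin 4) K,
      (aeval ![h₁, h₂, h₃, h₄] P ∈
          Ideal.span ({X 0} : Set (MvPolynomial (Fin 4) K)) ↔
        P ∈ Ideal.span ({X 0, X 1 ^ 3 + X 2 ^ 2} : Set (MvPolynomial (Fin 4) K))) ∧
      (aeval ![(0 : MvPolynomial (Fin 4) K), -X 1 ^ 2, X 1 ^ 3,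
            -3 * X 2 ^ 2 * X 1 ^ 2] P = 0 ↔
        P ∈ Ideal.span ({X 0, X 1 ^ 3 + X 2 ^ 2} : Set (MvPolynomial (Fin 4) K))) := by
  intro P
  have ker := aeval_eq_zero_iff_mem_span_cusp K two_ne_zero three_ne_zero P
  have h_at_x_zero : (fun i => aeval (Function.update X 0 0) (![h₁, h₂, h₃, h₄] i)) =
      ![(0 : MvPolynomial (Fin 4) K), -X 1 ^ 2, X 1 ^ 3, -3 * X 2 ^ 2 * X 1 ^ 2] := by
    subst hh₁ hh₂ hh₃ hh₄
    funext i
    fin_cases i <;> simp [map_ofNat]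
  rw [mem_span_X_iff_aeval_update_zero, comp_aeval_apply, h_at_x_zero]
  exact ⟨ker, ker⟩
end

section
/- If f ∈ ker D ⊆ k[x,s,t,u,v] is homogeneous of degree 2 with respect to the grading deg x = 1, deg s = deg t = deg u = 3, deg v = 2, then f is a scalar multiple of x^2. -/
/-! The only monomials of weighted degree 2 are `x^2` and `v`, so `f = a x^2 + b v`;
then `D f = b x^2`, which forces `b = 0`. -/

open MvPolynomial

theorem MvPolynomial.IsWeightedHomogeneous.eq_sum_monomial_of_forall_weight_mem
    {R σ M : Type*} [CommSemiring R] [AddCommMonoid M] {w : σ → M} {n : M}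
    {φ : MvPolynomial σ R} (hφ : IsWeightedHomogeneous w φ n) {s : Finset (σ →₀ ℕ)}
    (hs : ∀ d, Finsupp.weight w d = n → d ∈ s) :
    φ = ∑ d ∈ s, monomial d (coeff d φ) := by
  conv_lhs => rw [φ.as_sum]
  refine Finset.sum_subset (fun d hd ↦ hs d (hφ (mem_support_iff.mp hd))) fun d _ hd ↦ ?_
  rw [notMem_support_iff.mp hd, monomial_zero]

theorem eq_single_of_weight_eq_two {d : Fin 5 →₀ ℕ}
    (hd : Finsupp.weight ![1, 3, 3, 3, 2] d = 2) :
    d = Finsupp.single 0 2 ∨ d = Finsupp.single 4 1 := by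
  rw [Finsupp.weight_apply, Finsupp.sum_fintype _ _ (fun _ ↦ by simp), Fin.sum_univ_five] at hd
  simp only [Matrix.cons_val, smul_eq_mul] at hd
  obtain h | h : d 0 = 2 ∧ d 4 = 0 ∨ d 0 = 0 ∧ d 4 = 1 := by omega
  · left; ext i; fin_cases i <;> simp <;> omega
  · right; ext i; fin_cases i <;> simp <;> omega

theorem degree_two_invariants_general
    (K : Type*) [Field K]
    (D : Derivation K (MvPolynomial (Fin 5) K) (MvPolynomial (Fin 5) K))
    (hx : D (X 0) = 0) (hv : D (X 4) = X 0 ^ 2)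
    (w : Fin 5 → ℕ) (hw : w = ![1, 3, 3, 3, 2]) :
    ∀ f : MvPolynomial (Fin 5) K, D f = 0 → IsWeightedHomogeneous w f 2 →
      ∃ c : K, f = C c * X 0 ^ 2 := by
  intro f hDf hf
  subst hw
  set a := coeff (Finsupp.single 0 2) f
  set b := coeff (Finsupp.single 4 1) f
  have hform : f = C a * X 0 ^ 2 + C b * X 4 := by
    have hne : Finsupp.single (0 : Fin 5) 2 ≠ Finsupp.single 4 1 := by
      simp [Finsupp.single_eq_single_iff]
    rw [hf.eq_sum_monomial_of_forall_weight_mem (s := {Finsupp.single 0 2, Finsupp.single 4 1})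
      (fun d hd ↦ by simpa using eq_single_of_weight_eq_two hd), Finset.sum_pair hne,
      C_mul_X_pow_eq_monomial, C_mul_X_eq_monomial]
  have hDf_eq : D f = C b * X 0 ^ 2 := by
    simp [hform, D.leibniz_pow, hx, hv]
  have hb : b = 0 := by
    simpa [X_ne_zero] using hDf_eq.symm.trans hDf
  exact ⟨a, by rw [hform, hb, C_0, zero_mul, add_zero]⟩

theorem degree_two_invariants
    (K : Type*) [Field K] [CharZero K]
    (D : Derivation K (MvPolynomial (Fin 5) K) (MvPolynomial (Fin 5) K))
    (hx : D (X 0) = 0) (hs : D (X 1) = X 0 ^ 3) (ht : D (X 2) = X 1)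
    (hu : D (X 3) = X 2) (hv : D (X 4) = X 0 ^ 2)
    (w : Fin 5 → ℕ) (hw : w = ![1, 3, 3, 3, 2]) :
    ∀ f : MvPolynomial (Fin 5) K, D f = 0 → IsWeightedHomogeneous w f 2 →
      ∃ c : K, f = C c * X 0 ^ 2 :=
  degree_two_invariants_general K D hx hv w hw
end

section
/- The six invariants f1,…,f6 form a separating set for ker D: if p1, p2 ∈ k^5 satisfy f_i(p1) = f_i(p2) for i = 1,…,6, then f(p1) = f(p2) for every f ∈ ker D, where D = x^3 ∂/∂s + s ∂/∂t + t ∂/∂u + x^2 ∂/∂v on k[x,s,t,u,v]. -/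
/-!
The derivation `D` integrates to the `𝔾ₐ`-action `c • (x, s, t, u, v) =
(x, s + c x³, t + c s + c² x³ / 2, u + c t + c² s / 2 + c³ x³ / 6, v + c x²)`,
and every `f ∈ ker D` is constant on its orbits. Off the plane `x = s = 0` the values of
`f₁, …, f₆` determine the orbit: the time from `p` to `q` is `(s_q - s_p) / x³` when `x ≠ 0` and
`(t_q - t_p) / s` when `x = 0 ≠ s`.

On the plane `x = s = 0` every `f ∈ ker D` is constant. For `t ≠ 0`, the orbit through
`(6tε², -12t²ε³, 6tuε³, 0, v)` reaches `(6tε², 24t²ε³, t + 6tuε³, u, v + 6tε)` at time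
`1 / (6tε³)`; both sides being polynomial in `ε`, letting `ε → 0` gives
`f(0,0,t,u,v) = f(0,0,0,0,v)`, and then also for `t = 0`. Along the `v`-axis, `∂_v` commutes
with `D` (no coefficient of `D` involves `v`), so every `∂_vᵏ f` lies in `ker D`; restricting
`D g = x³ ∂_s g + s ∂_t g + t ∂_u g + x² ∂_v g = 0` to the `x`-axis and dividing by `x²` gives
`(∂_v g)(0) = 0` for `g ∈ ker D`. Hence all derivatives of `v ↦ f(0,0,0,0,v)` vanish at `0`.
-/

open MvPolynomial
open scoped Polynomial

@[simp]
theorem Matrix.comp_vecCons {α β : Type*} {n : ℕ} (g : α → β) (a : α) (v : Fin n → α) :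
    g ∘ Matrix.vecCons a v = Matrix.vecCons (g a) (g ∘ v) := by
  ext i
  refine Fin.cases ?_ ?_ i <;> simp

@[simp]
theorem Matrix.comp_vecEmpty {α β : Type*} (g : α → β) : g ∘ ![] = ![] :=
  Matrix.empty_eq _

namespace Polynomial

theorem eq_C_of_iterate_derivative_eval_zero {R : Type*} [Semiring R] [IsAddTorsionFree R]
    (p : R[X]) (h : ∀ k, 0 < k → (derivative^[k] p).eval 0 = 0) : p = C (p.coeff 0) := by
  ext k
  rcases Nat.eq_zero_or_pos k with rfl | hk
  · simp
  · have hcoeff := coeff_iterate_derivative p 0 (k := k)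
    rw [coeff_zero_eq_eval_zero, h k hk, zero_add, Nat.descFactorial_self] at hcoeff
    rw [coeff_C_of_ne_zero hk.ne', ← smul_eq_zero_iff_right (Nat.factorial_ne_zero k), ← hcoeff]

end Polynomial

namespace MvPolynomial

variable {σ R : Type*}

section CommSemiring

variable [CommSemiring R]

theorem derivation_eq_sum_mul_pderiv [Fintype σ]
    (D : Derivation R (MvPolynomial σ R) (MvPolynomial σ R)) (f : MvPolynomial σ R) :
    D f = ∑ i, D (X i) * pderiv i f := by
  classical
  let E : Derivation R (MvPolynomial σ R) (MvPolynomial σ R) := ∑ i, D (X i) • pderiv i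
  have hE : ∀ g, E g = ∑ i, D (X i) * pderiv i g := fun g => by
    rw [← Derivation.coeFnAddMonoidHom_apply, map_sum, Finset.sum_apply]
    simp [Derivation.coeFnAddMonoidHom_apply]
  rw [← hE, show D = E from derivation_ext fun j => by simp [hE, pderiv_X, Pi.single_apply]]

theorem eval_aeval (γ : σ → R[X]) (f : MvPolynomial σ R) (ε : R) :
    (aeval γ f).eval ε = eval (Polynomial.eval ε ∘ γ) f := by
  rw [← Polynomial.coe_aeval_eq_eval, comp_aeval_apply, ← coe_aeval_eq_eval]
  rfl

theorem derivative_aeval_eq_aeval_apply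
    (D : Derivation R (MvPolynomial σ R) (MvPolynomial σ R)) (γ : σ → R[X])
    (hγ : ∀ i, Polynomial.derivative (γ i) = aeval γ (D (X i))) (f : MvPolynomial σ R) :
    Polynomial.derivative (aeval γ f) = aeval γ (D f) := by
  induction f using MvPolynomial.induction_on with
  | C a => simp
  | add p q hp hq => simp [hp, hq]
  | mul_X p i hp =>
    rw [map_mul, Polynomial.derivative_mul, hp, Derivation.leibniz, aeval_X, hγ]
    simp only [smul_eq_mul, map_add, map_mul, aeval_X]
    ring

theorem eval_comp_eq_of_derivation_eq_zero [IsAddTorsionFree R]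
    (D : Derivation R (MvPolynomial σ R) (MvPolynomial σ R)) (γ : σ → R[X])
    (hγ : ∀ i, Polynomial.derivative (γ i) = aeval γ (D (X i)))
    {f : MvPolynomial σ R} (hf : D f = 0) (c : R) :
    eval (Polynomial.eval c ∘ γ) f = eval (Polynomial.eval 0 ∘ γ) f := by
  have hconst := Polynomial.eq_C_of_derivative_eq_zero
    ((derivative_aeval_eq_aeval_apply D γ hγ f).trans (by rw [hf, map_zero]))
  rw [← eval_aeval, ← eval_aeval, hconst]
  simp

end CommSemiring

section CommRing

variable [CommRing R]

theorem commute_pderiv_of_pderiv_apply_X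
    (D : Derivation R (MvPolynomial σ R) (MvPolynomial σ R)) (i : σ)
    (h : ∀ j, pderiv i (D (X j)) = 0) : Function.Commute D (pderiv i) := by
  classical
  have hD : ⁅D, pderiv i⁆ = 0 := derivation_ext fun j => by
    rw [Derivation.commutator_apply, h, pderiv_X]
    by_cases hij : i = j <;> simp [hij]
  intro f
  rw [← sub_eq_zero, ← Derivation.commutator_apply, hD, Derivation.zero_apply]

theorem eval_comp_eq_of_infinite [IsDomain R] (f : MvPolynomial σ R)
    (γ δ : σ → R[X]) {S : Set R} (hS : S.Infinite)
    (h : ∀ ε ∈ S, eval (Polynomial.eval ε ∘ γ) f = eval (Polynomial.eval ε ∘ δ) f) (ε : R) :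
    eval (Polynomial.eval ε ∘ γ) f = eval (Polynomial.eval ε ∘ δ) f := by
  have hγδ : aeval γ f = aeval δ f :=
    Polynomial.eq_of_infinite_eval_eq _ _ (hS.mono fun ε hε => by
      simpa [eval_aeval] using h ε hε)
  rw [← eval_aeval, ← eval_aeval, hγδ]

end CommRing

end MvPolynomial

namespace DaigleFreudenburg

variable {K : Type*} [Field K]

variable (K) in
noncomputable def derivation :
    Derivation K (MvPolynomial (Fin 5) K) (MvPolynomial (Fin 5) K) :=
  mkDerivation K ![0, X 0 ^ 3, X 1, X 2, X 0 ^ 2]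

noncomputable def orbit (p : Fin 5 → K) : Fin 5 → K[X] :=
  ![Polynomial.C (p 0),
    Polynomial.C (p 1) + Polynomial.C (p 0 ^ 3) * Polynomial.X,
    Polynomial.C (p 2) + Polynomial.C (p 1) * Polynomial.X
      + Polynomial.C (p 0 ^ 3 / 2) * Polynomial.X ^ 2,
    Polynomial.C (p 3) + Polynomial.C (p 2) * Polynomial.X
      + Polynomial.C (p 1 / 2) * Polynomial.X ^ 2 + Polynomial.C (p 0 ^ 3 / 6) * Polynomial.X ^ 3,
    Polynomial.C (p 4) + Polynomial.C (p 0 ^ 2) * Polynomial.X]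

theorem eval_comp_orbit (p : Fin 5 → K) (c : K) :
    Polynomial.eval c ∘ orbit p = ![p 0, p 1 + p 0 ^ 3 * c, p 2 + p 1 * c + p 0 ^ 3 / 2 * c ^ 2,
      p 3 + p 2 * c + p 1 / 2 * c ^ 2 + p 0 ^ 3 / 6 * c ^ 3, p 4 + p 0 ^ 2 * c] := by
  simp [orbit]

theorem commute_derivation_pderiv_four :
    Function.Commute (derivation K) (pderiv 4) :=
  commute_pderiv_of_pderiv_apply_X _ 4 fun j => by
    fin_cases j <;> simp [derivation, mkDerivation_X, pderiv_X]

theorem eval_zero_pderiv_four_eq_zero {g : MvPolynomial (Fin 5) K}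
    (hg : derivation K g = 0) : eval 0 (pderiv 4 g) = 0 := by
  have h := congrArg (aeval (![Polynomial.X, 0, 0, 0, 0] : Fin 5 → K[X])) hg
  rw [derivation_eq_sum_mul_pderiv, Fin.sum_univ_five] at h
  simp only [derivation, mkDerivation_X, Fin.isValue, Matrix.cons_val, map_add, map_mul,
    map_pow, map_zero, aeval_X, zero_mul, zero_add, add_zero] at h
  have hdiv : Polynomial.X * aeval (![Polynomial.X, 0, 0, 0, 0] : Fin 5 → K[X]) (pderiv 1 g)
      + aeval ![Polynomial.X, 0, 0, 0, 0] (pderiv 4 g) = 0 :=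
    (mul_eq_zero.mp (by linear_combination h)).resolve_left (pow_ne_zero 2 Polynomial.X_ne_zero)
  have h0 := congrArg (Polynomial.eval 0) hdiv
  simpa [eval_aeval, show (![0, 0, 0, 0, 0] : Fin 5 → K) = 0 by simp] using h0

variable [CharZero K]

theorem derivative_orbit (p : Fin 5 → K) (i : Fin 5) :
    Polynomial.derivative (orbit p i) = aeval (orbit p) (derivation K (X i)) := by
  refine Polynomial.funext fun ε => ?_
  fin_cases i <;>
    simp [orbit, derivation, mkDerivation_X, Polynomial.derivative_pow] <;> ring

theorem eval_orbit {f : MvPolynomial (Fin 5) K} (hf : derivation K f = 0)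
    (p : Fin 5 → K) (c : K) : eval (Polynomial.eval c ∘ orbit p) f = eval p f := by
  rw [eval_comp_eq_of_derivation_eq_zero _ _ (derivative_orbit p) hf, eval_comp_orbit]
  congr
  funext i
  fin_cases i <;> simp

theorem eval_comp_orbit_of_ne_zero {p q : Fin 5 → K} (hx : p 0 ≠ 0) (h₁ : p 0 = q 0)
    (h₂ : 2 * p 0 ^ 3 * p 2 - p 1 ^ 2 = 2 * q 0 ^ 3 * q 2 - q 1 ^ 2)
    (h₃ : 3 * p 0 ^ 6 * p 3 - 3 * p 0 ^ 3 * p 2 * p 1 + p 1 ^ 3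
      = 3 * q 0 ^ 6 * q 3 - 3 * q 0 ^ 3 * q 2 * q 1 + q 1 ^ 3)
    (h₄ : p 0 * p 4 - p 1 = q 0 * q 4 - q 1) :
    Polynomial.eval ((q 1 - p 1) / p 0 ^ 3) ∘ orbit p = q := by
  rw [← h₁] at h₂ h₃ h₄
  rw [eval_comp_orbit]
  funext i
  fin_cases i <;> simp only [Fin.zero_eta, Fin.mk_one, Fin.reduceFinMk, Matrix.cons_val] <;>
    try field_simp
  · exact h₁
  · ring
  · linear_combination h₂
  · linear_combination 4 * h₃ + 6 * q 1 * h₂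
  · linear_combination h₄

theorem eval_comp_orbit_of_eq_zero_of_ne_zero {p q : Fin 5 → K} (hx : p 0 = 0) (hs : p 1 ≠ 0)
    (h₁ : p 0 = q 0) (h₄ : p 0 * p 4 - p 1 = q 0 * q 4 - q 1)
    (h₅ : p 0 ^ 2 * p 2 * p 1 - p 1 ^ 2 * p 4 + 2 * p 0 ^ 3 * p 2 * p 4 - 3 * p 0 ^ 5 * p 3
      = q 0 ^ 2 * q 2 * q 1 - q 1 ^ 2 * q 4 + 2 * q 0 ^ 3 * q 2 * q 4 - 3 * q 0 ^ 5 * q 3)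
    (h₆ : -18 * p 0 ^ 3 * p 2 * p 1 * p 3 + 9 * p 0 ^ 6 * p 3 ^ 2 + 8 * p 0 ^ 3 * p 2 ^ 3
        + 6 * p 1 ^ 3 * p 3 - 3 * p 2 ^ 2 * p 1 ^ 2
      = -18 * q 0 ^ 3 * q 2 * q 1 * q 3 + 9 * q 0 ^ 6 * q 3 ^ 2 + 8 * q 0 ^ 3 * q 2 ^ 3
        + 6 * q 1 ^ 3 * q 3 - 3 * q 2 ^ 2 * q 1 ^ 2) :
    Polynomial.eval ((q 2 - p 2) / p 1) ∘ orbit p = q := by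
  have hq : q 0 = 0 := h₁ ▸ hx
  simp only [hx, hq, ne_eq, OfNat.ofNat_ne_zero, not_false_eq_true, zero_pow, mul_zero, zero_mul,
    zero_sub, sub_zero, add_zero, zero_add, neg_inj] at h₄ h₅ h₆
  rw [← h₄] at h₅ h₆
  rw [eval_comp_orbit, hx]
  funext i
  fin_cases i <;> simp only [Fin.zero_eta, Fin.mk_one, Fin.reduceFinMk, Matrix.cons_val] <;>
    try field_simp
  · exact hq.symm
  · linear_combination p 1 * h₄
  · ring
  · linear_combination 2 * h₆
  · apply mul_left_cancel₀ hs
    linear_combination h₅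

theorem eval_eq_of_forall_ne_zero_orbit {f : MvPolynomial (Fin 5) K}
    (hf : derivation K f = 0) (γ δ : Fin 5 → K[X]) (c : K → K)
    (h : ∀ ε ≠ 0, Polynomial.eval (c ε) ∘ orbit (Polynomial.eval ε ∘ γ) = Polynomial.eval ε ∘ δ) :
    eval (Polynomial.eval 0 ∘ γ) f = eval (Polynomial.eval 0 ∘ δ) f :=
  eval_comp_eq_of_infinite f γ δ (Set.finite_singleton 0).infinite_compl
    (fun ε hε => by rw [← h ε hε, eval_orbit hf]) 0

theorem eval_zero_zero_eq_eval_vAxis {f : MvPolynomial (Fin 5) K}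
    (hf : derivation K f = 0) (t u v : K) :
    eval ![0, 0, t, u, v] f = eval ![0, 0, 0, 0, v] f := by
  have hne : ∀ t ≠ 0, eval ![0, 0, t, u, v] f = eval ![0, 0, 0, 0, v] f := by
    intro t ht
    have h := eval_eq_of_forall_ne_zero_orbit hf
      ![Polynomial.C (6 * t) * Polynomial.X ^ 2, Polynomial.C (-12 * t ^ 2) * Polynomial.X ^ 3,
        Polynomial.C (6 * t * u) * Polynomial.X ^ 3, 0, Polynomial.C v]
      ![Polynomial.C (6 * t) * Polynomial.X ^ 2, Polynomial.C (24 * t ^ 2) * Polynomial.X ^ 3,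
        Polynomial.C t + Polynomial.C (6 * t * u) * Polynomial.X ^ 3, Polynomial.C u,
        Polynomial.C v + Polynomial.C (6 * t) * Polynomial.X]
      (fun ε => 1 / (6 * t * ε ^ 3)) fun ε hε => by
        funext i
        rw [eval_comp_orbit]
        fin_cases i <;> simp <;> field_simp <;> ring
    simpa using h.symm
  have h := eval_comp_eq_of_infinite f
    ![0, 0, Polynomial.X, Polynomial.C u, Polynomial.C v] ![0, 0, 0, 0, Polynomial.C v]
    (Set.finite_singleton 0).infinite_compl (fun ε hε => by simpa using hne ε hε) t
  simpa using h

theorem eval_vAxis_eq_eval_zero {f : MvPolynomial (Fin 5) K}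
    (hf : derivation K f = 0) (v : K) : eval ![0, 0, 0, 0, v] f = eval 0 f := by
  let γ : Fin 5 → K[X] := ![0, 0, 0, 0, Polynomial.X]
  have hγ : ∀ i,
      Polynomial.derivative (γ i) = aeval γ (pderiv 4 (X i : MvPolynomial (Fin 5) K)) := by
    intro i; fin_cases i <;> simp [γ, pderiv_X]
  have hγ0 : Polynomial.eval 0 ∘ γ = 0 := by
    ext i; fin_cases i <;> simp [γ]
  have hiter : ∀ k, Polynomial.derivative^[k] (aeval γ f) = aeval γ ((pderiv 4)^[k] f) :=
    fun k => (Function.Semiconj.iterate_right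
      (fun g => (derivative_aeval_eq_aeval_apply _ γ hγ g).symm) k f).symm
  have hconst := Polynomial.eq_C_of_iterate_derivative_eval_zero (aeval γ f) fun k hk => by
    obtain ⟨k, rfl⟩ := Nat.exists_eq_add_of_lt hk
    rw [hiter, eval_aeval, zero_add, Function.iterate_succ_apply', hγ0]
    have hk : derivation K ((pderiv 4)^[k] f) = 0 := by
      rw [(commute_derivation_pderiv_four.iterate_right k) f, hf, iterate_map_zero]
    exact eval_zero_pderiv_four_eq_zero hk
  have h := congrArg (Polynomial.eval v) hconst
  rw [Polynomial.eval_C, Polynomial.coeff_zero_eq_eval_zero, eval_aeval, eval_aeval, hγ0] at h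
  simpa [γ] using h

theorem eval_eq_eval_zero_of_eq_zero_of_eq_zero {f : MvPolynomial (Fin 5) K}
    (hf : derivation K f = 0) {p : Fin 5 → K} (hx : p 0 = 0) (hs : p 1 = 0) :
    eval p f = eval 0 f := by
  have hp : p = ![0, 0, p 2, p 3, p 4] := by
    funext i; fin_cases i <;> simp [hx, hs]
  rw [hp, eval_zero_zero_eq_eval_vAxis hf, eval_vAxis_eq_eval_zero hf]

end DaigleFreudenburg

open DaigleFreudenburg

theorem daigle_freudenburg_separating_set
    (K : Type*) [Field K] [CharZero K]
    (D : Derivation K (MvPolynomial (Fin 5) K) (MvPolynomial (Fin 5) K))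
    (hx : D (X 0) = 0) (hs : D (X 1) = X 0 ^ 3) (ht : D (X 2) = X 1)
    (hu : D (X 3) = X 2) (hv : D (X 4) = X 0 ^ 2)
    (f₁ f₂ f₃ f₄ f₅ f₆ : MvPolynomial (Fin 5) K)
    (hf₁ : f₁ = X 0)
    (hf₂ : f₂ = 2 * X 0 ^ 3 * X 2 - X 1 ^ 2)
    (hf₃ : f₃ = 3 * X 0 ^ 6 * X 3 - 3 * X 0 ^ 3 * X 2 * X 1 + X 1 ^ 3)
    (hf₄ : f₄ = X 0 * X 4 - X 1)
    (hf₅ : f₅ = X 0 ^ 2 * X 2 * X 1 - X 1 ^ 2 * X 4 + 2 * X 0 ^ 3 * X 2 * X 4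
        - 3 * X 0 ^ 5 * X 3)
    (hf₆ : f₆ = -18 * X 0 ^ 3 * X 2 * X 1 * X 3 + 9 * X 0 ^ 6 * X 3 ^ 2
        + 8 * X 0 ^ 3 * X 2 ^ 3 + 6 * X 1 ^ 3 * X 3 - 3 * X 2 ^ 2 * X 1 ^ 2)
    (p₁ p₂ : Fin 5 → K)
    (h₁ : eval p₁ f₁ = eval p₂ f₁) (h₂ : eval p₁ f₂ = eval p₂ f₂)
    (h₃ : eval p₁ f₃ = eval p₂ f₃) (h₄ : eval p₁ f₄ = eval p₂ f₄)
    (h₅ : eval p₁ f₅ = eval p₂ f₅) (h₆ : eval p₁ f₆ = eval p₂ f₆) :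
    ∀ f : MvPolynomial (Fin 5) K, D f = 0 → eval p₁ f = eval p₂ f := by
  intro f hf
  obtain rfl : D = derivation K := derivation_ext fun i => by
    fin_cases i <;> simp [derivation, mkDerivation_X, hx, hs, ht, hu, hv]
  subst hf₁ hf₂ hf₃ hf₄ hf₅ hf₆
  simp only [map_sub, map_add, map_mul, map_pow, map_neg, map_ofNat, eval_X] at h₁ h₂ h₃ h₄ h₅ h₆
  rcases ne_or_eq (p₁ 0) 0 with hx0 | hx0
  · rw [← eval_comp_orbit_of_ne_zero hx0 h₁ h₂ h₃ h₄, eval_orbit hf]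
  have hs1 : p₁ 1 = p₂ 1 := by
    rw [← h₁, hx0] at h₄
    linear_combination -h₄
  rcases ne_or_eq (p₁ 1) 0 with hs0 | hs0
  · rw [← eval_comp_orbit_of_eq_zero_of_ne_zero hx0 hs0 h₁ h₄ h₅ h₆, eval_orbit hf]
  · rw [eval_eq_eval_zero_of_eq_zero_of_eq_zero hf hx0 hs0,
      eval_eq_eval_zero_of_eq_zero_of_eq_zero hf (h₁.symm.trans hx0) (hs1.symm.trans hs0)]
end

section
/- If p1, p2 ∈ k^5 have first coordinate zero (x(p1) = x(p2) = 0) and nonzero equal second coordinate (s(p1) = s(p2) ≠ 0), and f_i(p1) = f_i(p2) for i = 4,5,6, then f(p1) = f(p2) for every f ∈ ker D. -/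
/-!
On the hyperplane `x = 0` the derivation acts as `s ∂/∂t + t ∂/∂u`, whose flow line through a
point is polynomial in time: `s` and `v` stay fixed, `t` moves linearly with speed `s`, and `u`
quadratically, so that `2su - t²` is conserved. An element of `ker D` is constant along such a
line, because its derivative along the line is `D f` evaluated on it. At `x = 0` the conditions on
`f₅` and `f₆` say that `p₁` and `p₂` have the same `v` and the same `2su - t²`; as `s ≠ 0`, the
point `p₂` is then reached from `p₁` at time `(t₂ - t₁) / s`.
-/

open MvPolynomial

section SolutionCurve

variable {R σ : Type*} [CommRing R]

def IsSolutionCurve (D : Derivation R (MvPolynomial σ R) (MvPolynomial σ R))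
    (q : σ → Polynomial R) : Prop :=
  ∀ i, Polynomial.derivative (q i) = aeval q (D (X i))

variable {D : Derivation R (MvPolynomial σ R) (MvPolynomial σ R)} {q : σ → Polynomial R}

theorem IsSolutionCurve.derivative_aeval (hq : IsSolutionCurve D q)
    (f : MvPolynomial σ R) :
    Polynomial.derivative (aeval q f) = aeval q (D f) := by
  induction f using MvPolynomial.induction_on with
  | C a => simp [← algebraMap_eq]
  | add f g hf hg => simp [hf, hg]
  | mul_X f i hf =>
    simp only [map_mul, Derivation.leibniz, map_add, smul_eq_mul, aeval_X,
      Polynomial.derivative_mul, hf, hq i]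
    ring

theorem eval_aeval_eq_eval (a : R) (f : MvPolynomial σ R) :
    (aeval q f).eval a = eval (fun i => (q i).eval a) f := by
  simpa using congr($(comp_aeval (R := R) q (Polynomial.aeval a)) f)

theorem IsSolutionCurve.eval_eq_of_derivation_eq_zero [IsAddTorsionFree R]
    (hq : IsSolutionCurve D q) {f : MvPolynomial σ R} (hf : D f = 0) (a b : R) :
    eval (fun i => (q i).eval a) f = eval (fun i => (q i).eval b) f := by
  have hconst : Polynomial.derivative (aeval q f) = 0 := by
    rw [hq.derivative_aeval, hf, map_zero]
  rw [← eval_aeval_eq_eval, ← eval_aeval_eq_eval, Polynomial.eq_C_of_derivative_eq_zero hconst]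
  simp

end SolutionCurve

section Trajectory

noncomputable def trajectory {K : Type*} [Field K] (p : Fin 5 → K) : Fin 5 → Polynomial K :=
  ![0, Polynomial.C (p 1), Polynomial.C (p 2) + Polynomial.C (p 1) * Polynomial.X,
    Polynomial.C (p 3) + Polynomial.C (p 2) * Polynomial.X
      + Polynomial.C (p 1 / 2) * Polynomial.X ^ 2,
    Polynomial.C (p 4)]

variable {K : Type*} [Field K]

theorem isSolutionCurve_trajectory [NeZero (2 : K)]
    {D : Derivation K (MvPolynomial (Fin 5) K) (MvPolynomial (Fin 5) K)}
    (hx : D (X 0) = 0) (hs : D (X 1) = X 0 ^ 3) (ht : D (X 2) = X 1)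
    (hu : D (X 3) = X 2) (hv : D (X 4) = X 0 ^ 2) (p : Fin 5 → K) :
    IsSolutionCurve D (trajectory p) := by
  intro i
  fin_cases i <;> simp [trajectory, hx, hs, ht, hu, hv]
  rw [one_add_one_eq_two, ← mul_assoc, ← Polynomial.C_ofNat, ← Polynomial.C_mul,
    div_mul_cancel₀ _ two_ne_zero]

theorem eval_trajectory_zero {p : Fin 5 → K} (hp : p 0 = 0) :
    (fun i => (trajectory p i).eval 0) = p := by
  funext i; fin_cases i <;> simp [trajectory, hp]

theorem eval_trajectory_eq [NeZero (2 : K)] {p p' : Fin 5 → K} (hp' : p' 0 = 0)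
    (hs : p 1 = p' 1) (hs₀ : p 1 ≠ 0) (hv : p 4 = p' 4)
    (hΔ : 2 * p 1 * p 3 - p 2 ^ 2 = 2 * p' 1 * p' 3 - p' 2 ^ 2) :
    (fun i => (trajectory p i).eval ((p' 2 - p 2) / p 1)) = p' := by
  rw [hs] at hΔ hs₀
  funext i
  fin_cases i <;> simp [trajectory, hp', hs, hv]
  · field_simp
    ring
  · field_simp
    linear_combination hΔ

end Trajectory

theorem separating_case_x_zero_s_nonzero_general
    (K : Type*) [Field K] [CharZero K]
    (D : Derivation K (MvPolynomial (Fin 5) K) (MvPolynomial (Fin 5) K))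
    (hx : D (X 0) = 0) (hs : D (X 1) = X 0 ^ 3) (ht : D (X 2) = X 1)
    (hu : D (X 3) = X 2) (hv : D (X 4) = X 0 ^ 2)
    (f₅ f₆ : MvPolynomial (Fin 5) K)
    (hf₅ : f₅ = X 0 ^ 2 * X 2 * X 1 - X 1 ^ 2 * X 4 + 2 * X 0 ^ 3 * X 2 * X 4
        - 3 * X 0 ^ 5 * X 3)
    (hf₆ : f₆ = -18 * X 0 ^ 3 * X 2 * X 1 * X 3 + 9 * X 0 ^ 6 * X 3 ^ 2
        + 8 * X 0 ^ 3 * X 2 ^ 3 + 6 * X 1 ^ 3 * X 3 - 3 * X 2 ^ 2 * X 1 ^ 2)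
    (p₁ p₂ : Fin 5 → K)
    (hp₁x : p₁ 0 = 0) (hp₂x : p₂ 0 = 0)
    (hps : p₁ 1 = p₂ 1) (hpsne : p₁ 1 ≠ 0)
    (h₅ : eval p₁ f₅ = eval p₂ f₅)
    (h₆ : eval p₁ f₆ = eval p₂ f₆) :
    ∀ f : MvPolynomial (Fin 5) K, D f = 0 → eval p₁ f = eval p₂ f := by
  intro f hf
  have hv₁₂ : p₁ 4 = p₂ 4 := by
    subst hf₅
    simpa [hp₁x, hp₂x, ← hps, hpsne] using h₅
  have hΔ : 2 * p₁ 1 * p₁ 3 - p₁ 2 ^ 2 = 2 * p₂ 1 * p₂ 3 - p₂ 2 ^ 2 := by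
    subst hf₆
    simp only [map_sub, map_add, map_mul, map_pow, map_neg, map_ofNat, eval_X, hp₁x, hp₂x,
      ← hps] at h₆
    have h3s : (3 : K) * p₁ 1 ^ 2 ≠ 0 := by simp [hpsne]
    rw [← hps]
    exact mul_left_cancel₀ h3s (by linear_combination h₆)
  rw [← eval_trajectory_zero hp₁x, ← eval_trajectory_eq hp₂x hps hpsne hv₁₂ hΔ]
  exact (isSolutionCurve_trajectory hx hs ht hu hv p₁).eval_eq_of_derivation_eq_zero hf _ _

theorem separating_case_x_zero_s_nonzero
    (K : Type*) [Field K] [CharZero K]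
    (D : Derivation K (MvPolynomial (Fin 5) K) (MvPolynomial (Fin 5) K))
    (hx : D (X 0) = 0) (hs : D (X 1) = X 0 ^ 3) (ht : D (X 2) = X 1)
    (hu : D (X 3) = X 2) (hv : D (X 4) = X 0 ^ 2)
    (f₄ f₅ f₆ : MvPolynomial (Fin 5) K)
    (hf₄ : f₄ = X 0 * X 4 - X 1)
    (hf₅ : f₅ = X 0 ^ 2 * X 2 * X 1 - X 1 ^ 2 * X 4 + 2 * X 0 ^ 3 * X 2 * X 4
        - 3 * X 0 ^ 5 * X 3)
    (hf₆ : f₆ = -18 * X 0 ^ 3 * X 2 * X 1 * X 3 + 9 * X 0 ^ 6 * X 3 ^ 2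
        + 8 * X 0 ^ 3 * X 2 ^ 3 + 6 * X 1 ^ 3 * X 3 - 3 * X 2 ^ 2 * X 1 ^ 2)
    (p₁ p₂ : Fin 5 → K)
    (hp₁x : p₁ 0 = 0) (hp₂x : p₂ 0 = 0)
    (hps : p₁ 1 = p₂ 1) (hpsne : p₁ 1 ≠ 0)
    (h₄ : eval p₁ f₄ = eval p₂ f₄)
    (h₅ : eval p₁ f₅ = eval p₂ f₅)
    (h₆ : eval p₁ f₆ = eval p₂ f₆) :
    ∀ f : MvPolynomial (Fin 5) K, D f = 0 → eval p₁ f = eval p₂ f :=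
  separating_case_x_zero_s_nonzero_general K D hx hs ht hu hv f₅ f₆ hf₅ hf₆ p₁ p₂ hp₁x hp₂x hps
    hpsne h₅ h₆
end
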